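/- arXiv:2206.05062 — 2 statements merged into one kernel-verified Lean document; each statement's English description precedes it below -/
import Mathlib

section
/- For every nonnegative integer n: P(n) = Σ_{k=0}^{⌊n/2⌋} Q(n−2k) · P(k). -/
/-- `P1 n` : number of integer partitions of `n`. -/
def P1 (n : ℕ) : ℕ := Fintype.card n.Partition

/-- `Q1 n` : number of integer partitions of `n` into distinct parts. -/
def Q1 (n : ℕ) : ℕ := Fintype.card {π : n.Partition // π.parts.Nodup}

/-!
Every multiset `s` splits uniquely as `d + 2 • m` with `d` duplicate-free: `d` takes each element
of odd multiplicity once and `m` takes half of every multiplicity, rounded down. For a partition of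
`n` whose half part sums to `k`, this yields a partition of `n - 2k` into distinct parts together
with an arbitrary partition of `k`; summing over `k` gives the identity.
-/
namespace Multiset

variable {α : Type*} [DecidableEq α]

noncomputable def oddPart (s : Multiset α) : Multiset α :=
  Finsupp.toMultiset (s.toFinsupp.mapRange (· % 2) (Nat.zero_mod 2))

noncomputable def halfPart (s : Multiset α) : Multiset α :=
  Finsupp.toMultiset (s.toFinsupp.mapRange (· / 2) (Nat.zero_div 2))

@[simp]
theorem count_oddPart (s : Multiset α) (a : α) : (oddPart s).count a = s.count a % 2 := by
  simp [oddPart]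

@[simp]
theorem count_halfPart (s : Multiset α) (a : α) : (halfPart s).count a = s.count a / 2 := by
  simp [halfPart]

theorem nodup_oddPart (s : Multiset α) : (oddPart s).Nodup :=
  nodup_iff_count_le_one.2 fun a => by simpa using Nat.lt_succ_iff.1 (Nat.mod_lt _ two_pos)

theorem oddPart_add_two_nsmul_halfPart (s : Multiset α) : oddPart s + 2 • halfPart s = s := by
  ext a
  simp only [count_add, count_nsmul, count_oddPart, count_halfPart]
  exact Nat.mod_add_div _ _

theorem oddPart_le (s : Multiset α) : oddPart s ≤ s :=
  le_iff_count.2 fun a => by simpa using Nat.mod_le _ _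

theorem halfPart_le (s : Multiset α) : halfPart s ≤ s :=
  le_iff_count.2 fun a => by simpa using Nat.div_le_self _ _

theorem sum_oddPart_add_two_nsmul_sum_halfPart [AddCommMonoid α] (s : Multiset α) :
    (oddPart s).sum + 2 • (halfPart s).sum = s.sum := by
  rw [← sum_nsmul, ← sum_add, oddPart_add_two_nsmul_halfPart]

variable {d m : Multiset α}

theorem oddPart_add_two_nsmul (hd : d.Nodup) : oddPart (d + 2 • m) = d := by
  ext a
  have := nodup_iff_count_le_one.1 hd a
  simp only [count_oddPart, count_add, count_nsmul]
  omega

theorem halfPart_add_two_nsmul (hd : d.Nodup) : halfPart (d + 2 • m) = m := by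
  ext a
  have := nodup_iff_count_le_one.1 hd a
  simp only [count_halfPart, count_add, count_nsmul]
  omega

end Multiset

namespace Nat.Partition

open Multiset

variable {n k : ℕ}

theorem two_mul_sum_halfPart_le (p : n.Partition) : 2 * (halfPart p.parts).sum ≤ n := by
  have := sum_oddPart_add_two_nsmul_sum_halfPart p.parts
  rw [p.parts_sum, smul_eq_mul] at this
  omega

noncomputable def halfPartSumFiberEquiv (hk : 2 * k ≤ n) :
    {p : n.Partition // (halfPart p.parts).sum = k} ≃
      {ν : (n - 2 * k).Partition // ν.parts.Nodup} × k.Partition where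
  toFun p :=
    (⟨⟨oddPart p.1.parts, fun hi => p.1.parts_pos (mem_of_le (oddPart_le _) hi), by
        have := sum_oddPart_add_two_nsmul_sum_halfPart p.1.parts
        rw [p.1.parts_sum, p.2, smul_eq_mul] at this
        omega⟩, nodup_oddPart _⟩,
      ⟨halfPart p.1.parts, fun hi => p.1.parts_pos (mem_of_le (halfPart_le _) hi), p.2⟩)
  invFun x :=
    ⟨⟨x.1.1.parts + 2 • x.2.parts, by
        simp only [mem_add, mem_nsmul_of_ne_zero two_ne_zero]
        rintro i (hi | hi)
        exacts [x.1.1.parts_pos hi, x.2.parts_pos hi], by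
        rw [sum_add, sum_nsmul, x.1.1.parts_sum, x.2.parts_sum, smul_eq_mul]
        omega⟩,
      by rw [halfPart_add_two_nsmul x.1.2, x.2.parts_sum]⟩
  left_inv p := Subtype.ext <| Nat.Partition.ext <| oddPart_add_two_nsmul_halfPart _
  right_inv x := Prod.ext (Subtype.ext <| Nat.Partition.ext <| oddPart_add_two_nsmul x.1.2)
    (Nat.Partition.ext <| halfPart_add_two_nsmul x.1.2)

end Nat.Partition

theorem stmt_3 (n : ℕ) :
    P1 n = ∑ k ∈ Finset.range (n / 2 + 1), Q1 (n - 2 * k) * P1 k := by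
  have hfib : ∀ k ∈ Finset.range (n / 2 + 1),
      (Finset.univ.filter fun p : n.Partition => (Multiset.halfPart p.parts).sum = k).card =
        Q1 (n - 2 * k) * P1 k := by
    intro k hk
    rw [← Fintype.card_subtype, Fintype.card_congr (Nat.Partition.halfPartSumFiberEquiv _),
      Fintype.card_prod, Q1, P1]
    have := Finset.mem_range.1 hk
    omega
  rw [P1, ← Finset.card_univ, Finset.card_eq_sum_card_fiberwise (t := Finset.range (n / 2 + 1)),
    Finset.sum_congr rfl hfib]
  intro p _
  simp only [Finset.mem_coe, Finset.mem_range]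
  have := p.two_mul_sum_halfPart_le
  omega
end

section
/- For all nonnegative integers n and m, the following identity holds in ℚ(q): Σ_{k=0}^{⌊n/2⌋} (−1)^k · q^{2·C(k,2)} · [m+n−2k choose m]_q · [m+1 choose k]_{q^2} = q^{C(n,2)} · [m+1 choose n]_q. -/
/-!
In `ℚ(q)⟦t⟧` we have `∏_{i ≤ m} (1 - q^{2i} t²) = ∏_{i ≤ m} (1 - q^i t) · ∏_{i ≤ m} (1 + q^i t)`.
The first factor on the right is inverted by `∑_n [m+n choose m]_q tⁿ` (q-Pascal rule), and by the
q-binomial theorem `∏_{i < a} (1 + c q^i t) = ∑_n cⁿ q^{C(n,2)} [a choose n]_q tⁿ`, applied once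
with `c = 1` and once with `c = -1` and `q²` in place of `q`. Comparing the coefficients of `tⁿ` in
`∏_{i ≤ m} (1 - q^{2i} t²) · ∑_n [m+n choose m]_q tⁿ = ∏_{i ≤ m} (1 + q^i t)` gives the identity.
-/

/-- The Gaussian (q-)binomial coefficient `[a choose b]` with parameter `x`,
`∏_{j=1}^{b} (1 - x^{a-b+j})/(1 - x^j)`, an element of `ℚ(q)` when `x = q`;
it is zero when `b > a`. -/
noncomputable def qbinom (x : RatFunc ℚ) (a b : ℕ) : RatFunc ℚ :=
  if b ≤ a then ∏ j ∈ Finset.range b, (1 - x ^ (a - b + j + 1)) / (1 - x ^ (j + 1)) else 0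

/-- The indeterminate `q` of the field of rational functions `ℚ(q)`. -/
noncomputable def q : RatFunc ℚ := RatFunc.X

open Finset PowerSeries

theorem coeff_expand_mul_eq_sum {R : Type*} [CommRing R] (p : ℕ) (hp : p ≠ 0) (φ ψ : R⟦X⟧)
    (n : ℕ) :
    coeff n (expand p hp φ * ψ) = ∑ k ∈ range (n / p + 1), coeff k φ * coeff (n - p * k) ψ := by
  have himage : (range (n / p + 1)).image (p * ·) = {i ∈ range (n + 1) | p ∣ i} := by
    ext i
    simp only [mem_image, mem_filter, mem_range, Nat.lt_succ_iff,
      Nat.le_div_iff_mul_le (Nat.pos_of_ne_zero hp)]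
    constructor
    · rintro ⟨k, hk, rfl⟩
      exact ⟨by linarith [mul_comm k p], dvd_mul_right p k⟩
    · rintro ⟨hi, k, rfl⟩
      exact ⟨k, by linarith [mul_comm k p], rfl⟩
  rw [coeff_mul, Nat.sum_antidiagonal_eq_sum_range_succ_mk]
  simp only [coeff_expand, ite_mul, zero_mul]
  rw [← sum_filter, ← himage,
    sum_image fun a _ b _ h => Nat.eq_of_mul_eq_mul_left (Nat.pos_of_ne_zero hp) h]
  simp only [Nat.mul_div_cancel_left _ (Nat.pos_of_ne_zero hp)]

theorem expand_prod_one_add_C_neg_sq_mul_X {R : Type*} [CommRing R] (x : R) (a : ℕ) :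
    expand 2 two_ne_zero (∏ i ∈ range a, (1 + C (-1 * (x ^ 2) ^ i) * X)) =
      (∏ i ∈ range a, (1 - C (x ^ i) * X)) * ∏ i ∈ range a, (1 + C (x ^ i) * X) := by
  rw [map_prod, ← prod_mul_distrib]
  refine prod_congr rfl fun i _ => ?_
  simp only [map_add, map_one, map_mul, expand_C, expand_X, map_neg, map_pow]
  ring

section QBinomial

variable {x : RatFunc ℚ}

/-- `(x; x)ₙ` in q-Pochhammer notation. -/
noncomputable def qPochhammer (x : RatFunc ℚ) (n : ℕ) : RatFunc ℚ :=
  ∏ j ∈ range n, (1 - x ^ (j + 1))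

theorem qPochhammer_zero : qPochhammer x 0 = 1 :=
  prod_range_zero _

theorem qPochhammer_succ (n : ℕ) : qPochhammer x (n + 1) = qPochhammer x n * (1 - x ^ (n + 1)) :=
  prod_range_succ _ _

theorem qPochhammer_ne_zero (hx : ¬IsOfFinOrder x) (n : ℕ) : qPochhammer x n ≠ 0 :=
  prod_ne_zero_iff.mpr fun j _ h =>
    hx (isOfFinOrder_iff_pow_eq_one.mpr ⟨j + 1, j.succ_pos, (sub_eq_zero.mp h).symm⟩)

theorem qbinom_zero_right (a : ℕ) : qbinom x a 0 = 1 := by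
  simp [qbinom]

theorem qbinom_of_lt {a b : ℕ} (h : a < b) : qbinom x a b = 0 := by
  simp [qbinom, not_le.mpr h]

theorem qbinom_add_mul_qPochhammer (hx : ¬IsOfFinOrder x) (b c : ℕ) :
    qbinom x (b + c) b * qPochhammer x b * qPochhammer x c = qPochhammer x (b + c) := by
  have hsplit : qPochhammer x (c + b) =
      qPochhammer x c * ∏ j ∈ range b, (1 - x ^ (c + j + 1)) := by
    simp only [qPochhammer, prod_range_add, add_assoc]
  rw [qbinom, if_pos (Nat.le_add_right b c), Nat.add_sub_cancel_left, prod_div_distrib,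
    ← qPochhammer, div_mul_cancel₀ _ (qPochhammer_ne_zero hx b), add_comm b c, hsplit, mul_comm]

theorem qbinom_self (hx : ¬IsOfFinOrder x) (a : ℕ) : qbinom x a a = 1 := by
  have h := qbinom_add_mul_qPochhammer hx a 0
  rw [add_zero, qPochhammer_zero, mul_one] at h
  exact (mul_eq_right₀ (qPochhammer_ne_zero hx a)).mp h

theorem qbinom_succ_succ (hx : ¬IsOfFinOrder x) (a b : ℕ) :
    qbinom x (a + 1) (b + 1) = qbinom x a b + x ^ (b + 1) * qbinom x a (b + 1) := by
  obtain h | rfl | h := lt_trichotomy a b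
  · simp [qbinom_of_lt h, qbinom_of_lt (Nat.succ_lt_succ h), qbinom_of_lt (h.trans b.lt_succ_self)]
  · simp [qbinom_self hx, qbinom_of_lt a.lt_succ_self]
  obtain ⟨c, rfl⟩ := Nat.exists_eq_add_of_lt h
  have e₀ := qbinom_add_mul_qPochhammer hx (b + 1) (c + 1)
  have e₁ := qbinom_add_mul_qPochhammer hx b (c + 1)
  have e₂ := qbinom_add_mul_qPochhammer hx (b + 1) c
  rw [show b + 1 + (c + 1) = b + c + 1 + 1 by ring] at e₀
  rw [show b + (c + 1) = b + c + 1 by ring] at e₁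
  rw [show b + 1 + c = b + c + 1 by ring] at e₂
  simp only [qPochhammer_succ] at e₀ e₁ e₂
  refine mul_right_cancel₀ (mul_ne_zero (qPochhammer_ne_zero hx (b + 1))
    (qPochhammer_ne_zero hx (c + 1))) ?_
  simp only [qPochhammer_succ]
  -- after clearing denominators: `1 - x^(b+c+2) = (1 - x^(b+1)) + x^(b+1) (1 - x^(c+1))`
  linear_combination e₀ - (1 - x ^ (b + 1)) * e₁ - x ^ (b + 1) * (1 - x ^ (c + 1)) * e₂

theorem qbinom_succ_succ' (hx : ¬IsOfFinOrder x) (a b : ℕ) :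
    qbinom x (a + 1) (b + 1) = qbinom x a (b + 1) + x ^ (a - b) * qbinom x a b := by
  obtain h | rfl | h := lt_trichotomy a b
  · simp [qbinom_of_lt h, qbinom_of_lt (Nat.succ_lt_succ h), qbinom_of_lt (h.trans b.lt_succ_self)]
  · simp [qbinom_self hx, qbinom_of_lt a.lt_succ_self]
  obtain ⟨c, rfl⟩ := Nat.exists_eq_add_of_lt h
  have e₀ := qbinom_add_mul_qPochhammer hx (b + 1) (c + 1)
  have e₁ := qbinom_add_mul_qPochhammer hx b (c + 1)
  have e₂ := qbinom_add_mul_qPochhammer hx (b + 1) c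
  rw [show b + 1 + (c + 1) = b + c + 1 + 1 by ring] at e₀
  rw [show b + (c + 1) = b + c + 1 by ring] at e₁
  rw [show b + 1 + c = b + c + 1 by ring] at e₂
  simp only [qPochhammer_succ] at e₀ e₁ e₂
  refine mul_right_cancel₀ (mul_ne_zero (qPochhammer_ne_zero hx (b + 1))
    (qPochhammer_ne_zero hx (c + 1))) ?_
  simp only [qPochhammer_succ, show b + c + 1 - b = c + 1 by omega]
  linear_combination e₀ - (1 - x ^ (c + 1)) * e₂ - x ^ (c + 1) * (1 - x ^ (b + 1)) * e₁

theorem coeff_prod_one_add_C_mul_X (hx : ¬IsOfFinOrder x) (c : RatFunc ℚ) (a n : ℕ) :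
    coeff n (∏ i ∈ range a, (1 + C (c * x ^ i) * X)) = c ^ n * x ^ n.choose 2 * qbinom x a n := by
  induction a generalizing n with
  | zero => cases n <;> simp [coeff_one, qbinom_zero_right, qbinom_of_lt]
  | succ a ih =>
    rw [prod_range_succ, mul_add, mul_one, mul_comm (C _) X, ← mul_assoc, mul_comm _ X,
      mul_comm _ (C _), map_add, coeff_C_mul]
    cases n with
    | zero => simp [qbinom_zero_right]
    | succ n =>
      rw [coeff_succ_X_mul, ih, ih, qbinom_succ_succ' hx]
      rcases le_or_gt n a with h | h
      · have hpow : x ^ (n + 1).choose 2 * x ^ (a - n) = x ^ n.choose 2 * x ^ a := by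
          rw [← pow_add, ← pow_add, Nat.choose_succ_succ' n 1, Nat.choose_one_right, add_comm n,
            add_assoc, Nat.add_sub_cancel' h]
        linear_combination -(c ^ (n + 1) * qbinom x a n) * hpow
      · simp [qbinom_of_lt h]

noncomputable def qbinomSeries (x : RatFunc ℚ) (m : ℕ) : (RatFunc ℚ)⟦X⟧ :=
  PowerSeries.mk fun n => qbinom x (m + n) m

theorem one_sub_mul_qbinomSeries_succ (hx : ¬IsOfFinOrder x) (m : ℕ) :
    (1 - C (x ^ (m + 1)) * X) * qbinomSeries x (m + 1) = qbinomSeries x m := by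
  ext (_ | n)
  · simp [qbinomSeries, qbinom_self hx]
  · simp only [sub_mul, one_mul, mul_assoc, map_sub, coeff_C_mul, coeff_succ_X_mul,
      qbinomSeries, coeff_mk]
    rw [show m + 1 + (n + 1) = m + n + 1 + 1 by ring, show m + 1 + n = m + n + 1 by ring,
      show m + (n + 1) = m + n + 1 by ring, qbinom_succ_succ hx]
    ring

theorem prod_one_sub_mul_qbinomSeries (hx : ¬IsOfFinOrder x) (m : ℕ) :
    (∏ i ∈ range (m + 1), (1 - C (x ^ i) * X)) * qbinomSeries x m = 1 := by
  induction m with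
  | zero =>
    have hmk : qbinomSeries x 0 = PowerSeries.mk 1 := by
      ext
      simp [qbinomSeries, qbinom_zero_right]
    rw [hmk, prod_range_one, pow_zero, map_one, one_mul, mul_comm]
    exact mk_one_mul_one_sub_eq_one _
  | succ m ih => rw [prod_range_succ, mul_assoc, one_sub_mul_qbinomSeries_succ hx, ih]

end QBinomial

theorem not_isOfFinOrder_q : ¬IsOfFinOrder q := by
  rw [isOfFinOrder_iff_pow_eq_one]
  rintro ⟨n, hn, h⟩
  have hdeg := congrArg RatFunc.intDegree h
  rw [q, ← RatFunc.algebraMap_X, ← map_pow, RatFunc.intDegree_polynomial] at hdeg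
  simp at hdeg
  omega

theorem stmt_13 (n m : ℕ) :
    ∑ k ∈ Finset.range (n / 2 + 1),
      (-1 : RatFunc ℚ) ^ k * q ^ (2 * Nat.choose k 2) * qbinom q (m + n - 2 * k) m *
        qbinom (q ^ 2) (m + 1) k
    = q ^ Nat.choose n 2 * qbinom q (m + 1) n := by
  have hq := not_isOfFinOrder_q
  have hq2 : ¬IsOfFinOrder (q ^ 2) :=
    fun h => hq ((isOfFinOrder_pow.mp h).resolve_right two_ne_zero)
  have hseries : expand 2 two_ne_zero (∏ i ∈ range (m + 1), (1 + C (-1 * (q ^ 2) ^ i) * X)) *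
      qbinomSeries q m = ∏ i ∈ range (m + 1), (1 + C (1 * q ^ i) * X) := by
    rw [expand_prod_one_add_C_neg_sq_mul_X, mul_right_comm, prod_one_sub_mul_qbinomSeries hq,
      one_mul]
    simp only [one_mul]
  have hcoeff := congrArg (coeff n) hseries
  rw [coeff_expand_mul_eq_sum, coeff_prod_one_add_C_mul_X hq, one_pow, one_mul] at hcoeff
  rw [← hcoeff]
  refine sum_congr rfl fun k hk => ?_
  rw [mem_range] at hk
  rw [coeff_prod_one_add_C_mul_X hq2, qbinomSeries, coeff_mk, ← pow_mul,
    show m + (n - 2 * k) = m + n - 2 * k by omega]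
  ring
end
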